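/- Any changing CDM-preserving double edge swap involving edges (u,v) and (x,y) of a colored multigraph G satisfies {c(u), c(v)} = {c(x), c(y)}. Equivalently: if a double edge swap applied to edges (u,v), (x,y) produces a multigraph H ≠ G with the same Colored Degree Matrix as G, then the multiset of endpoint colors of (u,v) equals that of (x,y). -/

import Mathlib

/-!
Cancelling the untouched edges `E - {uv, xy}`, the swap must preserve the colored degrees of
the two-edge multigraph `{uv, xy}` itself, and a changing swap has `u ≠ y` and `v ≠ x`.
If `u`, `v`, `x`, `y` are distinct, the swap replaces the neighbor `v` of `u` by `x`, and the
neighbor `u` of `v` by `y`, so `c v = c x` and `c u = c y`. If two of them coincide (a loop, or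
a shared endpoint), the vertex concerned has two neighbors of its own color before (or after)
the swap, which forces all four colors to be equal.
-/

variable {V L : Type*} [DecidableEq V] [DecidableEq L]

/-- The ℓ-colored degree of `v` in a colored multigraph with coloring `c` and
edge multiset `E` (self-loops count twice toward the color of `v`). -/
def cdeg (c : V → L) (E : Multiset (Sym2 V)) (ℓ : L) (v : V) : ℕ :=
  (E.map (Sym2.lift ⟨fun a b =>
      (if a = v ∧ c b = ℓ then 1 else 0) + (if b = v ∧ c a = ℓ then 1 else 0),
      fun _ _ => add_comm _ _⟩)).sum

/-- The degree of `v` (self-loops count twice). -/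
def deg (E : Multiset (Sym2 V)) (v : V) : ℕ :=
  (E.map (Sym2.lift ⟨fun a b =>
      (if a = v then 1 else 0) + (if b = v then 1 else 0),
      fun _ _ => add_comm _ _⟩)).sum

lemma ite_add_ite_eq_two_iff {p q : Prop} [Decidable p] [Decidable q] :
    (if p then 1 else 0) + (if q then 1 else 0) = 2 ↔ p ∧ q := by
  split_ifs <;> simp_all

section
variable (c : V → L)

lemma cdeg_add (A B : Multiset (Sym2 V)) (ℓ : L) (w : V) :
    cdeg c (A + B) ℓ w = cdeg c A ℓ w + cdeg c B ℓ w := by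
  simp [cdeg]

lemma cdeg_pair (a b d e : V) (ℓ : L) (w : V) :
    cdeg c {s(a, b), s(d, e)} ℓ w =
      (if a = w ∧ c b = ℓ then 1 else 0) + (if b = w ∧ c a = ℓ then 1 else 0) +
      ((if d = w ∧ c e = ℓ then 1 else 0) + (if e = w ∧ c d = ℓ then 1 else 0)) := by
  simp [cdeg]

lemma cdeg_eq_of_cdeg_sub_add_eq {E P N : Multiset (Sym2 V)} (hP : P ≤ E)
    (h : ∀ ℓ w, cdeg c (E - P + N) ℓ w = cdeg c E ℓ w) (ℓ : L) (w : V) :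
    cdeg c N ℓ w = cdeg c P ℓ w := by
  have h := h ℓ w
  rw [cdeg_add] at h
  conv_rhs at h => rw [← tsub_add_cancel_of_le hP, cdeg_add]
  omega

lemma colors_eq_of_cdeg_pair_swap_eq {u v x y : V} (huy : u ≠ y) (hvx : v ≠ x)
    (h : ∀ ℓ w, cdeg c {s(u, x), s(v, y)} ℓ w = cdeg c {s(u, v), s(x, y)} ℓ w) :
    s(c u, c v) = s(c x, c y) := by
  simp only [cdeg_pair] at h
  by_cases huv : u = v
  · subst huv
    obtain ⟨hx, hy⟩ : c x = c u ∧ c y = c u :=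
      ite_add_ite_eq_two_iff.mp (by simpa [huy.symm, hvx.symm] using h (c u) u)
    rw [hx, hy]
  by_cases hxy : x = y
  · subst hxy
    obtain ⟨hu, hv⟩ : c u = c x ∧ c v = c x :=
      ite_add_ite_eq_two_iff.mp (by simpa [huy, hvx] using h (c x) x)
    rw [hu, hv]
  by_cases hux : u = x
  · subst hux
    obtain ⟨hv, hy⟩ : c v = c u ∧ c y = c u :=
      ite_add_ite_eq_two_iff.mp (by simpa [huy.symm, hvx] using (h (c u) u).symm)
    rw [hv, hy]
  by_cases hvy : v = y
  · subst hvy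
    obtain ⟨hu, hx⟩ : c u = c v ∧ c x = c v :=
      ite_add_ite_eq_two_iff.mp (by simpa [huy, hvx.symm] using (h (c v) v).symm)
    rw [hu, hx]
  have hcv : c v = c x := by
    simpa [Ne.symm huv, huy.symm, hvx.symm, hvy, Ne.symm hux] using (h (c x) u).symm
  have hcu : c u = c y := by
    simpa [huv, huy, Ne.symm hvx, Ne.symm hvy] using (h (c y) v).symm
  rw [hcu, hcv, Sym2.eq_swap]

lemma colors_eq_of_changing_cdes {E : Multiset (Sym2 V)} {u v x y : V}
    (hmem : {s(u, v), s(x, y)} ≤ E)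
    (hchanging : E - {s(u, v), s(x, y)} + {s(u, x), s(v, y)} ≠ E)
    (hcdm : ∀ ℓ w, cdeg c (E - {s(u, v), s(x, y)} + {s(u, x), s(v, y)}) ℓ w = cdeg c E ℓ w) :
    s(c u, c v) = s(c x, c y) := by
  have hE : E - {s(u, v), s(x, y)} + {s(u, v), s(x, y)} = E := tsub_add_cancel_of_le hmem
  have huy : u ≠ y := by
    rintro rfl
    refine hchanging ?_
    rwa [Sym2.eq_swap (a := u) (b := x), Sym2.eq_swap (a := v), Multiset.pair_comm s(x, u)]
  have hvx : v ≠ x := by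
    rintro rfl
    exact hchanging hE
  exact colors_eq_of_cdeg_pair_swap_eq c huy hvx (cdeg_eq_of_cdeg_sub_add_eq c hmem hcdm)

end

/-- Any changing CDM-preserving double edge swap involves two edges with the same
multiset of endpoint colors: if applying one of the two double edge swaps to edges
`(u,v)`, `(x,y)` of `E` yields `H ≠ E` with the same Colored Degree Matrix as `E`,
then `{c u, c v} = {c x, c y}` as unordered pairs. -/
theorem changing_cdes_same_colors
    (c : V → L) (E : Multiset (Sym2 V)) (u v x y : V)
    (hmem : ({s(u, v), s(x, y)} : Multiset (Sym2 V)) ≤ E)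
    (H : Multiset (Sym2 V))
    (hH : H = E - {s(u, v), s(x, y)} + {s(u, x), s(v, y)} ∨
          H = E - {s(u, v), s(x, y)} + {s(u, y), s(v, x)})
    (hchanging : H ≠ E)
    (hcdm : ∀ (ℓ : L) (w : V), cdeg c H ℓ w = cdeg c E ℓ w) :
    s(c u, c v) = s(c x, c y) := by
  rcases hH with rfl | rfl
  · exact colors_eq_of_changing_cdes c hmem hchanging hcdm
  · rw [Sym2.eq_swap (a := c x)]
    rw [← Sym2.eq_swap (a := y) (b := x)] at hmem hchanging hcdm
    exact colors_eq_of_changing_cdes c hmem hchanging hcdm
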